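/- arXiv:2107.08157 — 2 statements merged into one kernel-verified Lean document; each statement's English description precedes it below -/
import Mathlib

section
/- Let T1 < T2 be real numbers, let (λ_n)_{n≥1} be a strictly increasing sequence of positive real numbers, and let (a_n)_{n≥1} be real numbers such that the series ∑_{n=1}^∞ |a_n| e^{-λ_n T1} converges. If ∑_{n=1}^∞ a_n e^{-λ_n t} = 0 for every t with T1 < t < T2, then ∑_{n=1}^∞ a_n e^{-λ_n t} = 0 for every t > T1. -/
/-! Since `|e^{-λ z}| = e^{-λ Re z} ≤ e^{-λ T1}` for `Re z > T1`, the complexified series converges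
locally uniformly on the half-plane `Re z > T1` and is holomorphic there. It vanishes on the real
interval `(T1, T2)`, which accumulates inside the connected half-plane, so by the identity theorem
it vanishes on the whole half-plane, in particular on `(T1, ∞)`. -/

open Real

open Set Filter Topology

theorem AnalyticOnNhd.eqOn_zero_of_eq_zero_on_Ioo {E : Type*} [NormedAddCommGroup E]
    [NormedSpace ℂ E] {f : ℂ → E} {U : Set ℂ} {a b : ℝ} (hf : AnalyticOnNhd ℂ f U)
    (hU : IsPreconnected U) (hab : a < b) (hIoo : ∀ t ∈ Ioo a b, (t : ℂ) ∈ U)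
    (hzero : ∀ t ∈ Ioo a b, f t = 0) : EqOn f 0 U := by
  obtain ⟨c, hc⟩ : (Ioo a b).Nonempty := nonempty_Ioo.mpr hab
  have hfreq : ∃ᶠ t : ℝ in 𝓝[≠] c, f t = 0 :=
    (eventually_nhdsWithin_of_eventually_nhds (eventually_of_mem (Ioo_mem_nhds hc.1 hc.2)
      hzero)).frequently
  have hofReal : Tendsto ((↑) : ℝ → ℂ) (𝓝[≠] c) (𝓝[≠] (c : ℂ)) :=
    Complex.continuous_ofReal.continuousWithinAt.tendsto_nhdsWithin fun _ _ ↦ by simp_all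
  exact hf.eqOn_zero_of_preconnected_of_frequently_eq_zero hU (hIoo c hc)
    (hofReal.frequently hfreq)

noncomputable def dirichletSeries (a : ℕ → ℂ) (lam : ℕ → ℝ) (z : ℂ) : ℂ :=
  ∑' n, a n * Complex.exp (-(lam n) * z)

lemma norm_mul_cexp_neg_mul_le (c : ℂ) {l T : ℝ} (hl : 0 ≤ l) {z : ℂ} (hz : T ≤ z.re) :
    ‖c * Complex.exp (-l * z)‖ ≤ ‖c‖ * Real.exp (-l * T) := by
  rw [norm_mul, Complex.norm_exp]
  gcongr
  simpa using mul_le_mul_of_nonneg_left hz hl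

lemma differentiableOn_dirichletSeries {a : ℕ → ℂ} {lam : ℕ → ℝ} {T : ℝ}
    (hlam : ∀ n, 0 ≤ lam n) (hsum : Summable fun n ↦ ‖a n‖ * Real.exp (-(lam n) * T)) :
    DifferentiableOn ℂ (dirichletSeries a lam) {z | T < z.re} :=
  Complex.differentiableOn_tsum_of_summable_norm hsum
    (fun _ ↦ (by fun_prop : Differentiable ℂ _).differentiableOn)
    (isOpen_lt continuous_const Complex.continuous_re)
    fun n _ hz ↦ norm_mul_cexp_neg_mul_le _ (hlam n) hz.le

lemma dirichletSeries_ofReal (a : ℕ → ℝ) (lam : ℕ → ℝ) (t : ℝ) :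
    dirichletSeries (fun n ↦ a n) lam t = ↑(∑' n, a n * Real.exp (-(lam n) * t)) := by
  rw [Complex.ofReal_tsum]
  push_cast
  rfl

theorem dirichlet_series_continuation_general
    (T1 T2 : ℝ) (hT : T1 < T2)
    (lam : ℕ → ℝ) (hpos : ∀ n, 0 < lam n)
    (a : ℕ → ℝ)
    (hsum : Summable (fun n => |a n| * Real.exp (-(lam n) * T1)))
    (hzero : ∀ t, T1 < t → t < T2 → ∑' n, a n * Real.exp (-(lam n) * t) = 0) :
    ∀ t, T1 < t → ∑' n, a n * Real.exp (-(lam n) * t) = 0 := by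
  intro t ht
  have hsumℂ : Summable fun n ↦ ‖(a n : ℂ)‖ * Real.exp (-(lam n) * T1) := by
    simpa only [Complex.norm_real, Real.norm_eq_abs] using hsum
  have hanalytic := (differentiableOn_dirichletSeries (fun n ↦ (hpos n).le) hsumℂ).analyticOnNhd
    (isOpen_lt continuous_const Complex.continuous_re)
  have hvanish := hanalytic.eqOn_zero_of_eq_zero_on_Ioo (convex_halfSpace_re_gt T1).isPreconnected
    hT (fun s hs ↦ by simpa using hs.1)
    (fun s hs ↦ by rw [dirichletSeries_ofReal, hzero s hs.1 hs.2, Complex.ofReal_zero])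
  have hvanish_t := hvanish (show T1 < (t : ℂ).re by simpa using ht)
  rwa [dirichletSeries_ofReal, Pi.zero_apply, Complex.ofReal_eq_zero] at hvanish_t

theorem dirichlet_series_continuation
    (T1 T2 : ℝ) (hT : T1 < T2)
    (lam : ℕ → ℝ) (hmono : StrictMono lam) (hpos : ∀ n, 0 < lam n)
    (a : ℕ → ℝ)
    (hsum : Summable (fun n => |a n| * Real.exp (-(lam n) * T1)))
    (hzero : ∀ t, T1 < t → t < T2 → ∑' n, a n * Real.exp (-(lam n) * t) = 0) :
    ∀ t, T1 < t → ∑' n, a n * Real.exp (-(lam n) * t) = 0 :=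
  dirichlet_series_continuation_general T1 T2 hT lam hpos a hsum hzero
end

section
/- Let (p_n)_{n≥1} be a strictly increasing sequence of positive real numbers tending to infinity, and let (α_n)_{n≥1} be real numbers with ∑_{n=1}^∞ |α_n| < ∞. If ∑_{n=1}^∞ α_n cos(p_n t) = 0 for every t > 0, then α_n = 0 for every n ≥ 1. -/
/-!
Multiply the series by `cos (p k t)` and average over `[0, T]`. The mean of
`cos (p n t) * cos (p k t)` tends to `1/2` if `n = k` and to `0` otherwise, and is bounded by `1`,
so by dominated convergence the vanishing means of the series tend to `α k / 2`.
-/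

open Real Filter MeasureTheory Topology

lemma intervalIntegral_cos_mul (c T : ℝ) :
    ∫ t in (0 : ℝ)..T, cos (c * t) = if c = 0 then T else sin (c * T) / c := by
  split_ifs with hc
  · simp [hc]
  · simpa [div_eq_inv_mul] using intervalIntegral.integral_comp_mul_left (a := 0) (b := T) cos hc

lemma tendsto_average_cos_mul (c : ℝ) :
    Tendsto (fun T => T⁻¹ * ∫ t in (0 : ℝ)..T, cos (c * t)) atTop
      (𝓝 (if c = 0 then 1 else 0)) := by
  simp_rw [intervalIntegral_cos_mul]
  split_ifs with hc
  · refine tendsto_const_nhds.congr' ?_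
    filter_upwards [eventually_ne_atTop 0] with T hT
    exact (inv_mul_cancel₀ hT).symm
  · refine tendsto_inv_atTop_zero.zero_mul_isBoundedUnder_le
      (isBoundedUnder_of ⟨|c|⁻¹, fun T => ?_⟩)
    rw [Function.comp_apply, Real.norm_eq_abs, abs_div]
    exact div_le_div_of_nonneg_right (abs_sin_le_one _) (abs_nonneg c) |>.trans_eq (one_div _)

lemma tendsto_average_cos_mul_cos (a b : ℝ) :
    Tendsto (fun T => T⁻¹ * ∫ t in (0 : ℝ)..T, cos (a * t) * cos (b * t)) atTop
      (𝓝 (((if a - b = 0 then 1 else 0) + (if a + b = 0 then 1 else 0)) / 2)) := by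
  have hprod (t : ℝ) :
      cos (a * t) * cos (b * t) = (cos ((a - b) * t) + cos ((a + b) * t)) / 2 := by
    rw [sub_mul, add_mul, ← two_mul_cos_mul_cos]; ring
  have hint (c T : ℝ) : IntervalIntegrable (fun t => cos (c * t)) volume 0 T :=
    (continuous_cos.comp (continuous_const_mul c)).intervalIntegrable _ _
  refine ((tendsto_average_cos_mul (a - b)).add (tendsto_average_cos_mul (a + b))).div_const 2
    |>.congr fun T => ?_
  simp_rw [hprod, intervalIntegral.integral_div,
    intervalIntegral.integral_add (hint _ _) (hint _ _)]
  ring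

lemma tendsto_average_cos_mul_cos_of_pos {a b : ℝ} (ha : 0 < a) (hb : 0 < b) :
    Tendsto (fun T => T⁻¹ * ∫ t in (0 : ℝ)..T, cos (a * t) * cos (b * t)) atTop
      (𝓝 (if a = b then 1 / 2 else 0)) := by
  convert tendsto_average_cos_mul_cos a b using 2
  simp only [sub_eq_zero, (add_pos ha hb).ne', ↓reduceIte, add_zero]
  split_ifs <;> norm_num

lemma hasSum_intervalIntegral_mul_of_summable_abs {α : ℕ → ℝ} (hα : Summable (|α ·|))
    {f : ℕ → ℝ → ℝ} (hf : ∀ n, Continuous (f n)) (hf_le : ∀ n t, |f n t| ≤ 1) (a b : ℝ) :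
    HasSum (fun n => ∫ t in a..b, α n * f n t) (∫ t in a..b, ∑' n, α n * f n t) := by
  have hbound (n : ℕ) (t : ℝ) : ‖α n * f n t‖ ≤ |α n| := by
    rw [norm_mul, Real.norm_eq_abs]
    exact mul_le_of_le_one_right (abs_nonneg _) (hf_le n t)
  refine intervalIntegral.hasSum_integral_of_dominated_convergence (fun n _ => |α n|)
    (fun n => ((hf n).const_mul _).aestronglyMeasurable) (fun n => .of_forall fun t _ => hbound n t)
    (.of_forall fun _ _ => hα) intervalIntegrable_const (.of_forall fun t _ => ?_)
  exact (Summable.of_norm_bounded hα (hbound · t)).hasSum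

lemma abs_cos_mul_cos_le_one (x y : ℝ) : |cos x * cos y| ≤ 1 := by
  rw [abs_mul]
  exact mul_le_one₀ (abs_cos_le_one x) (abs_nonneg _) (abs_cos_le_one y)

lemma abs_inv_mul_intervalIntegral_le_one {g : ℝ → ℝ} (hg : ∀ t, |g t| ≤ 1) {T : ℝ}
    (hT : 0 < T) :
    |T⁻¹ * ∫ t in (0 : ℝ)..T, g t| ≤ 1 := by
  have h := intervalIntegral.norm_integral_le_of_norm_le_const (a := 0) (b := T)
    fun t _ => (Real.norm_eq_abs _).trans_le (hg t)
  rw [Real.norm_eq_abs, sub_zero, one_mul, abs_of_pos hT] at h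
  rw [abs_mul, abs_inv, abs_of_pos hT]
  exact inv_mul_le_one_of_le₀ h hT.le

lemma tsum_mul_average_cos_mul_cos_eq_zero {p α : ℕ → ℝ} (hsum : Summable (|α ·|))
    (hzero : ∀ t, 0 < t → ∑' n, α n * cos (p n * t) = 0) (b : ℝ) {T : ℝ} (hT : 0 < T) :
    ∑' n, α n * (T⁻¹ * ∫ t in (0 : ℝ)..T, cos (p n * t) * cos (b * t)) = 0 := by
  have hvanish : ∫ t in (0 : ℝ)..T, ∑' n, α n * (cos (p n * t) * cos (b * t)) = 0 := by
    rw [intervalIntegral.integral_of_le hT.le]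
    refine setIntegral_eq_zero_of_forall_eq_zero fun t ht => ?_
    simp_rw [← mul_assoc]
    rw [tsum_mul_right, hzero t ht.1, zero_mul]
  have h := (hasSum_intervalIntegral_mul_of_summable_abs hsum
    (f := fun n t => cos (p n * t) * cos (b * t)) (by fun_prop)
    (fun _ _ => abs_cos_mul_cos_le_one _ _) 0 T).mul_left T⁻¹
  rw [hvanish, mul_zero] at h
  refine (tsum_congr fun n => ?_).trans h.tsum_eq
  rw [intervalIntegral.integral_const_mul, mul_left_comm]

theorem cosine_series_uniqueness_general
    (p : ℕ → ℝ) (hmono : StrictMono p) (hpos : ∀ n, 0 < p n)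
    (α : ℕ → ℝ) (hsum : Summable (fun n => |α n|))
    (hzero : ∀ t : ℝ, 0 < t → ∑' n, α n * Real.cos (p n * t) = 0) :
    ∀ n, α n = 0 := by
  intro k
  set A : ℕ → ℝ → ℝ :=
    fun n T => T⁻¹ * ∫ t in (0 : ℝ)..T, cos (p n * t) * cos (p k * t)
  have hA_le (T : ℝ) (hT : 0 < T) (n : ℕ) : ‖α n * A n T‖ ≤ |α n| := by
    rw [norm_mul, Real.norm_eq_abs]
    exact mul_le_of_le_one_right (abs_nonneg _)
      (abs_inv_mul_intervalIntegral_le_one (fun _ => abs_cos_mul_cos_le_one _ _) hT)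
  have hlim := tendsto_tsum_of_dominated_convergence hsum
    (fun n => ((tendsto_average_cos_mul_cos_of_pos (hpos n) (hpos k)).const_mul (α n)))
    ((eventually_gt_atTop 0).mono hA_le)
  simp_rw [hmono.injective.eq_iff] at hlim
  rw [tsum_eq_single k fun n hn => by rw [if_neg hn, mul_zero], if_pos rfl] at hlim
  have h0 : Tendsto (fun T => ∑' n, α n * A n T) atTop (𝓝 0) :=
    tendsto_const_nhds.congr' <| (eventually_gt_atTop 0).mono fun T hT =>
      (tsum_mul_average_cos_mul_cos_eq_zero hsum hzero (p k) hT).symm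
  linarith [tendsto_nhds_unique hlim h0]

theorem cosine_series_uniqueness
    (p : ℕ → ℝ) (hmono : StrictMono p) (hpos : ∀ n, 0 < p n)
    (htop : Tendsto p atTop atTop)
    (α : ℕ → ℝ) (hsum : Summable (fun n => |α n|))
    (hzero : ∀ t : ℝ, 0 < t → ∑' n, α n * Real.cos (p n * t) = 0) :
    ∀ n, α n = 0 :=
  cosine_series_uniqueness_general p hmono hpos α hsum hzero
end
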